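/- For f with L-Lipschitz gradient and minimizer x⋆ (∇f(x⋆)=0), gradient descent with stepsize h = 1/L applied to an m-strongly convex f satisfies ‖x_{k+1} − x⋆‖ ≤ (1 − m/L)‖x_k − x⋆‖, hence ‖x_k − x⋆‖ ≤ (1 − 1/κ)^k ‖x_0 − x⋆‖ with κ = L/m. -/

import Mathlib

/-!
With `G := g - m • id`, the gradient of `f - (m / 2) ‖·‖²`, the step satisfies
`L • (x - (1 / L) • g x - x⋆) = (L - m) • (x - x⋆) - (G x - G x⋆)`. As `f - (m / 2) ‖·‖²` is convex
and `(L - m)`-smooth, its gradient is co-coercive: `‖G x - G y‖² ≤ (L - m) ⟪x - y, G x - G y⟫`,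
and this is exactly what bounds the norm of the right-hand side by `(L - m) ‖x - x⋆‖`.
Iterating the contraction gives the geometric rate.
-/

open RealInnerProductSpace

theorem norm_smul_sub_le_of_sq_norm_le_mul_inner {E : Type*} [NormedAddCommGroup E]
    [InnerProductSpace ℝ E] {u v : E} {c : ℝ} (hc : 0 ≤ c) (h : ‖v‖ ^ 2 ≤ c * ⟪u, v⟫) :
    ‖c • u - v‖ ≤ c * ‖u‖ := by
  have hinner : 0 ≤ c * ⟪u, v⟫ := (sq_nonneg _).trans h
  refine le_of_sq_le_sq ?_ (by positivity)
  calc ‖c • u - v‖ ^ 2 = c ^ 2 * ‖u‖ ^ 2 - 2 * (c * ⟪u, v⟫) + ‖v‖ ^ 2 := by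
        rw [norm_sub_sq_real, real_inner_smul_left, norm_smul, Real.norm_eq_abs, mul_pow, sq_abs]
    _ ≤ (c * ‖u‖) ^ 2 := by linarith [mul_pow c ‖u‖ 2]

section Gradient

variable {E : Type*} [NormedAddCommGroup E] [InnerProductSpace ℝ E] [CompleteSpace E]
  {f : E → ℝ} {g : E → E}

theorem HasGradientAt.neg {f' x : E} (h : HasGradientAt f f' x) :
    HasGradientAt (fun y => -f y) (-f') x := by
  rw [hasGradientAt_iff_hasFDerivAt, map_neg] at *
  exact h.neg

theorem HasGradientAt.sub_mul_norm_sq {f' x : E} (h : HasGradientAt f f' x) (c : ℝ) :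
    HasGradientAt (fun y => f y - c / 2 * ‖y‖ ^ 2) (f' - c • x) x := by
  rw [hasGradientAt_iff_hasFDerivAt] at *
  refine (h.sub ((hasStrictFDerivAt_norm_sq x).hasFDerivAt.const_mul (c / 2))).congr_fderiv ?_
  ext v
  simp
  ring

theorem HasGradientAt.hasDerivAt_comp_add_smul {f' x v : E} {t : ℝ}
    (h : HasGradientAt f f' (x + t • v)) :
    HasDerivAt (fun s : ℝ => f (x + s • v)) ⟪f', v⟫ t := by
  have hline : HasDerivAt (fun s : ℝ => x + s • v) v t := by
    simpa using ((hasDerivAt_id t).smul_const v).const_add x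
  have := (hasGradientAt_iff_hasFDerivAt.mp h).comp_hasDerivAt t hline
  simp only [InnerProductSpace.toDual_apply_apply] at this
  exact this

theorem apply_le_of_inner_sub_le {c : ℝ} (hg : ∀ x, HasGradientAt f (g x) x)
    (hc : ∀ x y, ⟪x - y, g x - g y⟫ ≤ c * ‖x - y‖ ^ 2) (x y : E) :
    f y ≤ f x + ⟪g x, y - x⟫ + c / 2 * ‖y - x‖ ^ 2 := by
  set v := y - x
  set φ : ℝ → ℝ := fun t => f (x + t • v) - t * ⟪g x, v⟫ - c / 2 * ‖v‖ ^ 2 * t ^ 2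
  have hφ : ∀ t, HasDerivAt φ (⟪g (x + t • v) - g x, v⟫ - c * ‖v‖ ^ 2 * t) t := by
    intro t
    have hquad := (hasDerivAt_pow 2 t).const_mul (c / 2 * ‖v‖ ^ 2)
    refine ((((hg _).hasDerivAt_comp_add_smul).sub
      ((hasDerivAt_id t).mul_const ⟪g x, v⟫)).sub hquad).congr_deriv ?_
    simp only [inner_sub_left, one_mul]
    push_cast
    ring
  have hanti : AntitoneOn φ (Set.Ici 0) := by
    refine antitoneOn_of_hasDerivWithinAt_nonpos (convex_Ici 0)
      (fun t _ => (hφ t).continuousAt.continuousWithinAt) (fun t _ => (hφ t).hasDerivWithinAt) ?_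
    intro t ht
    rw [interior_Ici, Set.mem_Ioi] at ht
    have := hc (x + t • v) x
    rw [add_sub_cancel_left, norm_smul, Real.norm_eq_abs, abs_of_pos ht, real_inner_smul_left,
      real_inner_comm] at this
    nlinarith
  have hφ0 : φ 0 = f x := by simp [φ]
  have hφ1 : φ 1 = f y - ⟪g x, v⟫ - c / 2 * ‖v‖ ^ 2 := by simp [φ, v]
  linarith [hanti Set.self_mem_Ici (Set.mem_Ici.2 zero_le_one) zero_le_one]

theorem le_apply_of_le_inner_sub {c : ℝ} (hg : ∀ x, HasGradientAt f (g x) x)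
    (hc : ∀ x y, c * ‖x - y‖ ^ 2 ≤ ⟪x - y, g x - g y⟫) (x y : E) :
    f x + ⟪g x, y - x⟫ + c / 2 * ‖y - x‖ ^ 2 ≤ f y := by
  have := apply_le_of_inner_sub_le (f := fun y => -f y) (g := fun y => -g y) (c := -c)
    (fun x => (hg x).neg) (fun x y => by
      have := hc x y
      rw [neg_sub_neg, ← neg_sub (g x) (g y), inner_neg_right]; linarith) x y
  simp only [inner_neg_left] at this
  linarith

theorem apply_add_inner_add_sq_norm_le {ℓ : ℝ} (hg : ∀ x, HasGradientAt f (g x) x)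
    (hmono : ∀ x y, 0 ≤ ⟪x - y, g x - g y⟫) (hℓ : 0 < ℓ)
    (hsmooth : ∀ x y, ⟪x - y, g x - g y⟫ ≤ ℓ * ‖x - y‖ ^ 2) (x y : E) :
    f x + ⟪g x, y - x⟫ + 1 / (2 * ℓ) * ‖g x - g y‖ ^ 2 ≤ f y := by
  -- `f - ⟪g x, ·⟫` is convex and minimal at `x`; compare its value there with its value after
  -- a gradient step from `y`.
  rw [norm_sub_rev]
  set Δ := g y - g x
  set z := y - ℓ⁻¹ • Δ
  have hlow := le_apply_of_le_inner_sub (c := 0) hg (fun x y => by simpa using hmono x y) x z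
  have hup := apply_le_of_inner_sub_le hg hsmooth y z
  have hzy : z - y = -(ℓ⁻¹ • Δ) := by simp [z]
  have hzx : z - x = (y - x) + (z - y) := by abel
  rw [hzx, inner_add_right] at hlow
  have hΔ : ⟪g y, z - y⟫ - ⟪g x, z - y⟫ = -ℓ⁻¹ * ‖Δ‖ ^ 2 := by
    rw [← inner_sub_left, hzy, inner_neg_right, real_inner_smul_right, real_inner_self_eq_norm_sq]
    ring
  have hnorm : ‖z - y‖ ^ 2 = ℓ⁻¹ ^ 2 * ‖Δ‖ ^ 2 := by
    rw [hzy, norm_neg, norm_smul, mul_pow, Real.norm_eq_abs, sq_abs]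
  have hcoef : ℓ / 2 * (ℓ⁻¹ ^ 2 * ‖Δ‖ ^ 2) = ℓ⁻¹ * ‖Δ‖ ^ 2 - 1 / (2 * ℓ) * ‖Δ‖ ^ 2 := by
    field_simp
    ring
  rw [hnorm, hcoef] at hup
  simp only [zero_div, zero_mul, add_zero] at hlow
  linarith

theorem sq_norm_sub_le_mul_inner_sub {ℓ : ℝ} (hg : ∀ x, HasGradientAt f (g x) x)
    (hmono : ∀ x y, 0 ≤ ⟪x - y, g x - g y⟫) (hℓ : 0 < ℓ)
    (hsmooth : ∀ x y, ⟪x - y, g x - g y⟫ ≤ ℓ * ‖x - y‖ ^ 2) (x y : E) :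
    ‖g x - g y‖ ^ 2 ≤ ℓ * ⟪x - y, g x - g y⟫ := by
  have hxy := apply_add_inner_add_sq_norm_le hg hmono hℓ hsmooth x y
  have hyx := apply_add_inner_add_sq_norm_le hg hmono hℓ hsmooth y x
  have hsum : ⟪g x, y - x⟫ + ⟪g y, x - y⟫ = -⟪x - y, g x - g y⟫ := by
    simp only [inner_sub_right, real_inner_comm (g x), real_inner_comm (g y)]
    ring
  rw [norm_sub_rev (g y)] at hyx
  have hhalves : 1 / (2 * ℓ) * ‖g x - g y‖ ^ 2 + 1 / (2 * ℓ) * ‖g x - g y‖ ^ 2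
      = ℓ⁻¹ * ‖g x - g y‖ ^ 2 := by
    field_simp
    ring
  rw [← inv_mul_le_iff₀ hℓ]
  linarith

variable {m L : ℝ}

theorem sq_norm_sub_sub_smul_le_mul_inner (hg : ∀ x, HasGradientAt f (g x) x) (hmL : m ≤ L)
    (hmono : ∀ x y, m * ‖x - y‖ ^ 2 ≤ ⟪x - y, g x - g y⟫)
    (hlip : ∀ x y, ‖g x - g y‖ ≤ L * ‖x - y‖) (x y : E) :
    ‖g x - g y - m • (x - y)‖ ^ 2 ≤ (L - m) * ⟪x - y, g x - g y - m • (x - y)⟫ := by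
  have hinner : ∀ x y : E,
      ⟪x - y, g x - g y - m • (x - y)⟫ = ⟪x - y, g x - g y⟫ - m * ‖x - y‖ ^ 2 :=
    fun x y => by rw [inner_sub_right, real_inner_smul_right, real_inner_self_eq_norm_sq]
  have hupper : ∀ x y : E, ⟪x - y, g x - g y⟫ ≤ L * ‖x - y‖ ^ 2 := fun x y =>
    calc ⟪x - y, g x - g y⟫ ≤ ‖x - y‖ * ‖g x - g y‖ := real_inner_le_norm _ _
      _ ≤ ‖x - y‖ * (L * ‖x - y‖) := by gcongr; exact hlip x y
      _ = L * ‖x - y‖ ^ 2 := by ring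
  have hG : ∀ x y : E, g x - m • x - (g y - m • y) = g x - g y - m • (x - y) :=
    fun x y => by module
  rcases hmL.lt_or_eq with hlt | rfl
  · have := sq_norm_sub_le_mul_inner_sub (fun x => (hg x).sub_mul_norm_sq m)
      (fun x y => by rw [hG, hinner]; linarith [hmono x y]) (sub_pos.2 hlt)
      (fun x y => by rw [hG, hinner]; linarith [hupper x y]) x y
    rwa [hG] at this
  · -- for `m = L`, Cauchy–Schwarz is an equality and forces `g x - g y = m • (x - y)`
    have hinner_eq : ⟪x - y, g x - g y⟫ = m * ‖x - y‖ ^ 2 := (hupper x y).antisymm (hmono x y)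
    have hsq : ‖g x - g y‖ ^ 2 ≤ (m * ‖x - y‖) ^ 2 :=
      pow_le_pow_left₀ (norm_nonneg _) (hlip x y) 2
    rw [hinner, hinner_eq, norm_sub_sq_real, real_inner_smul_right, real_inner_comm, hinner_eq,
      norm_smul, Real.norm_eq_abs, mul_pow, sq_abs]
    nlinarith

theorem norm_sub_inv_smul_sub_le (hg : ∀ x, HasGradientAt f (g x) x) (hL : 0 < L) (hmL : m ≤ L)
    (hmono : ∀ x y, m * ‖x - y‖ ^ 2 ≤ ⟪x - y, g x - g y⟫)
    (hlip : ∀ x y, ‖g x - g y‖ ≤ L * ‖x - y‖) {xstar : E} (hstar : g xstar = 0) (x : E) :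
    ‖x - (1 / L) • g x - xstar‖ ≤ (1 - m / L) * ‖x - xstar‖ := by
  have hcoco := sq_norm_sub_sub_smul_le_mul_inner hg hmL hmono hlip x xstar
  rw [hstar, sub_zero] at hcoco
  have hcontr := norm_smul_sub_le_of_sq_norm_le_mul_inner (sub_nonneg.2 hmL) hcoco
  have hrescale : x - (1 / L) • g x - xstar
      = (1 / L) • ((L - m) • (x - xstar) - (g x - m • (x - xstar))) := by
    match_scalars <;> field_simp <;> ring
  calc ‖x - (1 / L) • g x - xstar‖ = 1 / L * ‖(L - m) • (x - xstar) - (g x - m • (x - xstar))‖ := by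
        rw [hrescale, norm_smul, Real.norm_of_nonneg (by positivity)]
    _ ≤ 1 / L * ((L - m) * ‖x - xstar‖) := by gcongr
    _ = (1 - m / L) * ‖x - xstar‖ := by field_simp

end Gradient

theorem gradient_descent_rate_one_over_L (d : ℕ) (f : EuclideanSpace ℝ (Fin d) → ℝ)
    (g : EuclideanSpace ℝ (Fin d) → EuclideanSpace ℝ (Fin d)) (m L : ℝ)
    (hm : 0 < m) (hmL : m ≤ L)
    (hgrad : ∀ x, HasGradientAt f (g x) x)
    (hmono : ∀ x y, m * ‖x - y‖ ^ 2 ≤ ⟪x - y, g x - g y⟫)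
    (hlip : ∀ x y, ‖g x - g y‖ ≤ L * ‖x - y‖)
    (xstar : EuclideanSpace ℝ (Fin d)) (hstar : g xstar = 0)
    (x : ℕ → EuclideanSpace ℝ (Fin d))
    (hiter : ∀ k, x (k + 1) = x k - (1 / L) • g (x k)) :
    (∀ k, ‖x (k + 1) - xstar‖ ≤ (1 - m / L) * ‖x k - xstar‖) ∧
      ∀ k, ‖x k - xstar‖ ≤ (1 - 1 / (L / m)) ^ k * ‖x 0 - xstar‖ := by
  have hL : 0 < L := hm.trans_le hmL
  have hstep : ∀ k, ‖x (k + 1) - xstar‖ ≤ (1 - m / L) * ‖x k - xstar‖ := fun k => by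
    rw [hiter k]
    exact norm_sub_inv_smul_sub_le hgrad hL hmL hmono hlip hstar (x k)
  refine ⟨hstep, fun k => ?_⟩
  rw [one_div_div]
  exact le_geom (u := fun k => ‖x k - xstar‖) (sub_nonneg.2 ((div_le_one hL).2 hmL)) k
    fun j _ => hstep j
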